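/- Let d ≥ 1, let (X_i)_{i≥1} be i.i.d. ℝ^d-valued random variables whose common law has a bounded density f with respect to Lebesgue measure, let K : ℝ^d → ℝ be bounded, measurable and compactly supported, and let g : ℝ^d → ℝ be bounded and measurable. Let (Hₙ)_{n≥1} be a sequence of invertible d×d real matrices with n·|det Hₙ| → ∞ as n → ∞. Then for every x ∈ ℝ^d, the random variables W₁ₙ(x) − ∫_{ℝ^d} K(p) g(x + Hₙp) f(x + Hₙp) dp, where W₁ₙ(x) = (1/n) ∑_{i=1}^n K_{Hₙ}(X_i − x) g(X_i), converge to 0 in probability as n → ∞. -/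

import Mathlib

/-!
With `φₙ(y) = K_{Hₙ}(y - x) g(y)`, `W₁ₙ(x)` is the empirical mean of the i.i.d. variables
`φₙ(Xᵢ)`. The substitution `y = x + Hₙ p` identifies `E φₙ(X₁)` with the centring integral and
bounds the second moment by `sup f · sup g² · ∫ K² / |det Hₙ|`. Chebyshev's inequality then bounds
the deviation probability by a constant over `δ² n |det Hₙ|`, which tends to zero.
-/

open MeasureTheory ProbabilityTheory Filter
open scoped ENNReal NNReal Topology Matrix

noncomputable section

def kernelScaled {d : ℕ} (H : Matrix (Fin d) (Fin d) ℝ) (K : (Fin d → ℝ) → ℝ)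
    (v : Fin d → ℝ) : ℝ :=
  |H.det|⁻¹ * K (H⁻¹.mulVec v)

namespace Matrix

variable {ι : Type*} [Fintype ι] [DecidableEq ι]

theorem measurableEmbedding_add_mulVec {M : Matrix ι ι ℝ} (hM : M.det ≠ 0) (c : ι → ℝ) :
    MeasurableEmbedding fun p : ι → ℝ => c + M *ᵥ p := by
  let := M.invertibleOfIsUnitDet (Ne.isUnit hM)
  exact (Homeomorph.addLeft c).measurableEmbedding.comp
    (M.toLinearEquiv' ‹_›).toContinuousLinearEquiv.toHomeomorph.measurableEmbedding

theorem map_add_mulVec_volume {M : Matrix ι ι ℝ} (hM : M.det ≠ 0) (c : ι → ℝ) :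
    Measure.map (fun p : ι → ℝ => c + M *ᵥ p) volume = ENNReal.ofReal |M.det|⁻¹ • volume := by
  have h : (fun p : ι → ℝ => c + M *ᵥ p) = (c + ·) ∘ toLin' M := rfl
  rw [h, ← Measure.map_map (measurable_const_add c)
      (LinearMap.continuous_of_finiteDimensional _).measurable,
    Real.map_matrix_volume_pi_eq_smul_volume_pi hM, Measure.map_smul,
    map_add_left_eq_self, abs_inv]

theorem integral_comp_add_mulVec {E : Type*} [NormedAddCommGroup E] [NormedSpace ℝ E]
    {M : Matrix ι ι ℝ} (hM : M.det ≠ 0) (c : ι → ℝ) (F : (ι → ℝ) → E) :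
    ∫ p, F (c + M *ᵥ p) = |M.det|⁻¹ • ∫ y, F y := by
  rw [← (measurableEmbedding_add_mulVec hM c).integral_map, map_add_mulVec_volume hM c,
    integral_smul_measure, ENNReal.toReal_ofReal (by positivity)]

end Matrix

section WeakLaw

variable {Ω α : Type*} [MeasurableSpace Ω] [MeasurableSpace α] {μ : Measure Ω}
  [IsProbabilityMeasure μ] {ν : Measure α} {X : ℕ → Ω → α} {φ : α → ℝ}

theorem variance_comp_le_integral_sq {Y : Ω → α} (hY : Measurable Y) (hlaw : μ.map Y = ν)
    (hφ : Measurable φ) : variance (fun ω => φ (Y ω)) μ ≤ ∫ y, φ y ^ 2 ∂ν := by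
  subst hlaw
  rw [integral_map hY.aemeasurable (hφ.pow_const 2).aestronglyMeasurable]
  exact variance_le_expectation_sq (hφ.comp hY).aestronglyMeasurable

theorem measure_le_abs_average_sub_integral_le (hX : ∀ i, Measurable (X i))
    (hindep : Pairwise fun i j => IndepFun (X i) (X j) μ) (hlaw : ∀ i, μ.map (X i) = ν)
    (hφ : Measurable φ) (hφ2 : MemLp φ 2 ν) {n : ℕ} (hn : 0 < n) {δ : ℝ} (hδ : 0 < δ) :
    μ {ω | δ ≤ |(n : ℝ)⁻¹ * ∑ i ∈ Finset.range n, φ (X i ω) - ∫ y, φ y ∂ν|}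
      ≤ ENNReal.ofReal ((∫ y, φ y ^ 2 ∂ν) / (n * δ ^ 2)) := by
  have hmem : ∀ i, MemLp (fun ω => φ (X i ω)) 2 μ := fun i =>
    (hlaw i ▸ hφ2).comp_of_map (hX i).aemeasurable
  have hmean : ∀ i, ∫ ω, φ (X i ω) ∂μ = ∫ y, φ y ∂ν := fun i => by
    rw [← hlaw i, integral_map (hX i).aemeasurable hφ.aestronglyMeasurable]
  set S : Ω → ℝ := ∑ i ∈ Finset.range n, fun ω => φ (X i ω) with hS
  have hSapply (ω : Ω) : S ω = ∑ i ∈ Finset.range n, φ (X i ω) := by simp [hS]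
  have hES : μ[S] = n * ∫ y, φ y ∂ν := by
    simp_rw [hSapply]
    rw [integral_finsetSum _ fun i _ => (hmem i).integrable one_le_two]
    simp [hmean]
  have hvarS : variance S μ ≤ n * ∫ y, φ y ^ 2 ∂ν := by
    rw [hS, IndepFun.variance_sum (fun i _ => hmem i)
      fun i _ j _ hij => (hindep hij).comp hφ hφ]
    simpa using Finset.sum_le_sum fun i (_ : i ∈ Finset.range n) =>
      variance_comp_le_integral_sq (hX i) (hlaw i) hφ
  have hn' : (0 : ℝ) < n := Nat.cast_pos.2 hn
  calc μ {ω | δ ≤ |(n : ℝ)⁻¹ * ∑ i ∈ Finset.range n, φ (X i ω) - ∫ y, φ y ∂ν|}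
      = μ {ω | n * δ ≤ |S ω - μ[S]|} := by
        congr 1; ext ω
        rw [Set.mem_ofPred_eq, Set.mem_ofPred_eq, hSapply, hES,
          ← mul_le_mul_iff_of_pos_left hn', ← abs_of_pos hn', ← abs_mul, abs_of_pos hn']
        congr! 2
        field_simp
    _ ≤ ENNReal.ofReal (variance S μ / (n * δ) ^ 2) :=
        meas_ge_le_variance_div_sq (memLp_finsetSum' _ fun i _ => hmem i) (by positivity)
    _ ≤ ENNReal.ofReal ((∫ y, φ y ^ 2 ∂ν) / (n * δ ^ 2)) := by
        apply ENNReal.ofReal_le_ofReal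
        calc variance S μ / (n * δ) ^ 2 ≤ n * (∫ y, φ y ^ 2 ∂ν) / (n * δ) ^ 2 := by gcongr
          _ = _ := by field_simp

end WeakLaw

theorem integral_withDensity_ofReal {α : Type*} [MeasurableSpace α] {ρ : Measure α}
    {f : α → ℝ} (hf : Measurable f) (hf0 : ∀ y, 0 ≤ f y) (φ : α → ℝ) :
    ∫ y, φ y ∂ρ.withDensity (fun y => ENNReal.ofReal (f y)) = ∫ y, f y * φ y ∂ρ := by
  rw [integral_withDensity_eq_integral_toReal_smul hf.ennreal_ofReal
    (.of_forall fun _ => ENNReal.ofReal_lt_top)]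
  simp only [ENNReal.toReal_ofReal (hf0 _), smul_eq_mul]

section KernelScaled

variable {d : ℕ} {H : Matrix (Fin d) (Fin d) ℝ} {K : (Fin d → ℝ) → ℝ}

theorem kernelScaled_add_mulVec_sub (hH : H.det ≠ 0) (x p : Fin d → ℝ) :
    kernelScaled H K (x + H *ᵥ p - x) = |H.det|⁻¹ * K p := by
  rw [kernelScaled, add_sub_cancel_left, Matrix.mulVec_mulVec,
    Matrix.nonsing_inv_mul H (Ne.isUnit hH), Matrix.one_mulVec]

theorem abs_kernelScaled_le {C : ℝ} (hKC : ∀ u, |K u| ≤ C) (v : Fin d → ℝ) :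
    |kernelScaled H K v| ≤ |H.det|⁻¹ * C := by
  rw [kernelScaled, abs_mul, abs_inv, abs_abs]
  exact mul_le_mul_of_nonneg_left (hKC _) (inv_nonneg.2 (abs_nonneg _))

theorem integral_mul_kernelScaled (hH : H.det ≠ 0) (x : Fin d → ℝ) (F : (Fin d → ℝ) → ℝ) :
    ∫ y, F y * kernelScaled H K (y - x) = ∫ p, K p * F (x + H *ᵥ p) := by
  have h := Matrix.integral_comp_add_mulVec hH x fun y => F y * kernelScaled H K (y - x)
  simp only [kernelScaled_add_mulVec_sub hH, smul_eq_mul, mul_left_comm (F _) _ (K _),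
    integral_const_mul, mul_comm (F _) (K _)] at h
  exact (mul_left_cancel₀ (inv_ne_zero (abs_ne_zero.2 hH)) h).symm

theorem integral_mul_kernelScaled_sq (hH : H.det ≠ 0) (x : Fin d → ℝ) (F : (Fin d → ℝ) → ℝ) :
    ∫ y, F y * kernelScaled H K (y - x) ^ 2 = |H.det|⁻¹ * ∫ p, K p ^ 2 * F (x + H *ᵥ p) := by
  have h := Matrix.integral_comp_add_mulVec hH x fun y => F y * kernelScaled H K (y - x) ^ 2
  have hexpand (p : Fin d → ℝ) : F (x + H *ᵥ p) * (|H.det|⁻¹ * K p) ^ 2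
      = |H.det|⁻¹ * (|H.det|⁻¹ * (K p ^ 2 * F (x + H *ᵥ p))) := by ring
  simp only [kernelScaled_add_mulVec_sub hH, smul_eq_mul, hexpand, integral_const_mul] at h
  exact (mul_left_cancel₀ (inv_ne_zero (abs_ne_zero.2 hH)) h).symm

theorem integral_mul_kernelScaled_sq_le (hH : H.det ≠ 0) (x : Fin d → ℝ)
    {F : (Fin d → ℝ) → ℝ} {C : ℝ} (hF0 : ∀ y, 0 ≤ F y) (hFC : ∀ y, F y ≤ C)
    (hK2 : Integrable fun p => K p ^ 2) :
    ∫ y, F y * kernelScaled H K (y - x) ^ 2 ≤ C * (∫ p, K p ^ 2) / |H.det| := by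
  have hmono : ∫ p, K p ^ 2 * F (x + H *ᵥ p) ≤ ∫ p, K p ^ 2 * C :=
    integral_mono_of_nonneg (.of_forall fun p => mul_nonneg (sq_nonneg _) (hF0 _))
      (hK2.mul_const C) (.of_forall fun p => mul_le_mul_of_nonneg_left (hFC _) (sq_nonneg _))
  calc ∫ y, F y * kernelScaled H K (y - x) ^ 2
      = |H.det|⁻¹ * ∫ p, K p ^ 2 * F (x + H *ᵥ p) := integral_mul_kernelScaled_sq hH x F
    _ ≤ |H.det|⁻¹ * ∫ p, K p ^ 2 * C := by gcongr
    _ = C * (∫ p, K p ^ 2) / |H.det| := by rw [integral_mul_const]; ring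

end KernelScaled

section KernelAverage

variable {d : ℕ} {Ω : Type*} [MeasurableSpace Ω] {μ : Measure Ω} [IsProbabilityMeasure μ]
  {X : ℕ → Ω → (Fin d → ℝ)} {f : (Fin d → ℝ) → ℝ} {H : Matrix (Fin d) (Fin d) ℝ}
  {K g : (Fin d → ℝ) → ℝ} {Cf CK Cg : ℝ}

theorem measure_lt_abs_kernelAverage_sub_le (hX : ∀ i, Measurable (X i))
    (hindep : Pairwise fun i j => IndepFun (X i) (X j) μ)
    (hfmeas : Measurable f) (hf0 : ∀ y, 0 ≤ f y) (hfC : ∀ y, f y ≤ Cf)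
    (hlaw : ∀ i, μ.map (X i) = volume.withDensity (fun y => ENNReal.ofReal (f y)))
    (hH : H.det ≠ 0) (hKmeas : Measurable K) (hKC : ∀ u, |K u| ≤ CK)
    (hK2 : Integrable fun p => K p ^ 2) (hgmeas : Measurable g) (hgC : ∀ u, |g u| ≤ Cg)
    (x : Fin d → ℝ) {n : ℕ} (hn : 0 < n) {δ : ℝ} (hδ : 0 < δ) :
    μ {ω | δ < |(n : ℝ)⁻¹ * (∑ i ∈ Finset.range n, kernelScaled H K (X i ω - x) * g (X i ω)) -
        ∫ p, K p * g (x + H *ᵥ p) * f (x + H *ᵥ p)|}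
      ≤ ENNReal.ofReal (Cf * Cg ^ 2 * (∫ p, K p ^ 2) / (δ ^ 2 * (n * |H.det|))) := by
  set ν := volume.withDensity fun y => ENNReal.ofReal (f y)
  have : IsProbabilityMeasure ν := hlaw 0 ▸ Measure.isProbabilityMeasure_map (hX 0).aemeasurable
  set φ : (Fin d → ℝ) → ℝ := fun y => kernelScaled H K (y - x) * g y with hφ_def
  have hφ : Measurable φ := by
    simp only [hφ_def, kernelScaled]
    fun_prop
  have hφ2 : MemLp φ 2 ν := by
    refine MemLp.of_bound hφ.aestronglyMeasurable (|H.det|⁻¹ * CK * Cg) (.of_forall fun y => ?_)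
    rw [Real.norm_eq_abs, abs_mul]
    exact mul_le_mul (abs_kernelScaled_le hKC _) (hgC y) (abs_nonneg _)
      (mul_nonneg (inv_nonneg.2 (abs_nonneg _)) ((abs_nonneg _).trans (hKC 0)))
  have hmean : ∫ y, φ y ∂ν = ∫ p, K p * g (x + H *ᵥ p) * f (x + H *ᵥ p) :=
    calc ∫ y, φ y ∂ν = ∫ y, g y * f y * kernelScaled H K (y - x) := by
          rw [integral_withDensity_ofReal hfmeas hf0]
          congr 1 with y
          ring
      _ = ∫ p, K p * (g (x + H *ᵥ p) * f (x + H *ᵥ p)) :=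
          integral_mul_kernelScaled hH x fun y => g y * f y
      _ = _ := by simp only [mul_assoc]
  have hsecond : ∫ y, φ y ^ 2 ∂ν ≤ Cf * Cg ^ 2 * (∫ p, K p ^ 2) / |H.det| :=
    calc ∫ y, φ y ^ 2 ∂ν = ∫ y, f y * g y ^ 2 * kernelScaled H K (y - x) ^ 2 := by
          rw [integral_withDensity_ofReal hfmeas hf0]
          congr 1 with y
          ring
      _ ≤ _ := by
          refine integral_mul_kernelScaled_sq_le hH x (fun y => mul_nonneg (hf0 y) (sq_nonneg _))
            (fun y => ?_) hK2
          refine mul_le_mul (hfC y) ?_ (sq_nonneg _) ((hf0 y).trans (hfC y))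
          rw [← sq_abs]
          exact pow_le_pow_left₀ (abs_nonneg _) (hgC y) 2
  calc _ ≤ μ {ω | δ ≤ |(n : ℝ)⁻¹ * ∑ i ∈ Finset.range n, φ (X i ω) - ∫ y, φ y ∂ν|} :=
        measure_mono fun ω hω => by
          rw [Set.mem_ofPred_eq, hmean]
          exact hω.le
    _ ≤ ENNReal.ofReal ((∫ y, φ y ^ 2 ∂ν) / (n * δ ^ 2)) :=
        measure_le_abs_average_sub_integral_le hX hindep hlaw hφ hφ2 hn hδ
    _ ≤ _ := by
        refine ENNReal.ofReal_le_ofReal ?_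
        calc (∫ y, φ y ^ 2 ∂ν) / (n * δ ^ 2)
            ≤ Cf * Cg ^ 2 * (∫ p, K p ^ 2) / |H.det| / (n * δ ^ 2) := by gcongr
          _ = _ := by ring

end KernelAverage

theorem W1n_tendsto_inProbability_general {d : ℕ}
    {Ω : Type*} [MeasurableSpace Ω] (μ : Measure Ω) [IsProbabilityMeasure μ]
    (X : ℕ → Ω → (Fin d → ℝ)) (hXmeas : ∀ i, Measurable (X i))
    (hindep : iIndepFun X μ)
    (f : (Fin d → ℝ) → ℝ) (hfmeas : Measurable f) (hfnonneg : ∀ y, 0 ≤ f y)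
    (hfbd : ∃ C, ∀ y, f y ≤ C)
    (hlaw : ∀ i, μ.map (X i) = volume.withDensity (fun y => ENNReal.ofReal (f y)))
    (Hseq : ℕ → Matrix (Fin d) (Fin d) ℝ)
    (hHlim : Tendsto (fun n : ℕ => (n : ℝ) * |(Hseq n).det|) atTop atTop)
    (K : (Fin d → ℝ) → ℝ) (hKmeas : Measurable K) (hKbd : ∃ C, ∀ u, |K u| ≤ C)
    (hKsupp : HasCompactSupport K)
    (g : (Fin d → ℝ) → ℝ) (hgmeas : Measurable g) (hgbd : ∃ C, ∀ u, |g u| ≤ C)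
    (x : Fin d → ℝ) :
    ∀ δ : ℝ, 0 < δ →
      Tendsto (fun n : ℕ =>
          μ {ω | δ < |(n : ℝ)⁻¹ *
              (∑ i ∈ Finset.range n, kernelScaled (Hseq n) K (X i ω - x) * g (X i ω)) -
            ∫ p, K p * g (x + (Hseq n).mulVec p) * f (x + (Hseq n).mulVec p)|})
        atTop (𝓝 0) := by
  intro δ hδ
  obtain ⟨Cf, hfC⟩ := hfbd
  obtain ⟨CK, hKC⟩ := hKbd
  obtain ⟨Cg, hgC⟩ := hgbd
  have hK2 : Integrable fun p => K p ^ 2 :=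
    (hKsupp.memLp_of_bound (p := 2) hKmeas.aestronglyMeasurable CK (.of_forall hKC)).integrable_sq
  have hbound : Tendsto (fun n : ℕ => ENNReal.ofReal
      (Cf * Cg ^ 2 * (∫ p, K p ^ 2) / (δ ^ 2 * (n * |(Hseq n).det|)))) atTop (𝓝 0) := by
    rw [← ENNReal.ofReal_zero]
    exact ENNReal.tendsto_ofReal
      (tendsto_const_nhds.div_atTop (hHlim.const_mul_atTop (pow_pos hδ 2)))
  refine tendsto_of_tendsto_of_tendsto_of_le_of_le' tendsto_const_nhds hbound
    (.of_forall fun _ => zero_le) ?_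
  filter_upwards [hHlim.eventually_gt_atTop 0] with n hn
  have hn0 : 0 < n := Nat.cast_pos.1 (pos_of_mul_pos_left hn (abs_nonneg _))
  have hdet : (Hseq n).det ≠ 0 := abs_pos.1 (pos_of_mul_pos_right hn (Nat.cast_nonneg n))
  exact measure_lt_abs_kernelAverage_sub_le hXmeas (fun i j hij => hindep.indepFun hij)
    hfmeas hfnonneg hfC hlaw hdet hKmeas hKC hK2 hgmeas hgC x hn0 hδ

/-- Conclusion of Lemma 1: if `n |det Hₙ| → ∞`, then
`W₁ₙ(x) − ∫ K(p) g(x + Hₙ p) f(x + Hₙ p) dp → 0` in probability. -/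
theorem W1n_tendsto_inProbability {d : ℕ} (hd : 1 ≤ d)
    {Ω : Type*} [MeasurableSpace Ω] (μ : Measure Ω) [IsProbabilityMeasure μ]
    (X : ℕ → Ω → (Fin d → ℝ)) (hXmeas : ∀ i, Measurable (X i))
    (hindep : iIndepFun X μ)
    (f : (Fin d → ℝ) → ℝ) (hfmeas : Measurable f) (hfnonneg : ∀ y, 0 ≤ f y)
    (hfbd : ∃ C, ∀ y, f y ≤ C)
    (hlaw : ∀ i, μ.map (X i) = volume.withDensity (fun y => ENNReal.ofReal (f y)))
    (Hseq : ℕ → Matrix (Fin d) (Fin d) ℝ) (hHinv : ∀ n, (Hseq n).det ≠ 0)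
    (hHlim : Tendsto (fun n : ℕ => (n : ℝ) * |(Hseq n).det|) atTop atTop)
    (K : (Fin d → ℝ) → ℝ) (hKmeas : Measurable K) (hKbd : ∃ C, ∀ u, |K u| ≤ C)
    (hKsupp : HasCompactSupport K)
    (g : (Fin d → ℝ) → ℝ) (hgmeas : Measurable g) (hgbd : ∃ C, ∀ u, |g u| ≤ C)
    (x : Fin d → ℝ) :
    ∀ δ : ℝ, 0 < δ →
      Tendsto (fun n : ℕ =>
          μ {ω | δ < |(n : ℝ)⁻¹ *
              (∑ i ∈ Finset.range n, kernelScaled (Hseq n) K (X i ω - x) * g (X i ω)) -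
            ∫ p, K p * g (x + (Hseq n).mulVec p) * f (x + (Hseq n).mulVec p)|})
        atTop (𝓝 0) :=
  W1n_tendsto_inProbability_general μ X hXmeas hindep f hfmeas hfnonneg hfbd hlaw Hseq hHlim K
    hKmeas hKbd hKsupp g hgmeas hgbd x

end
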